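/- Let ψ : ℝ² → ℝ be a continuous function that is nondecreasing in its first variable and nonincreasing in its second variable, and let α : ℝ → Set ℝ be a maximal monotone graph such that ψ(τ,χ) = 0 if and only if χ ∈ α(τ). Then for every (τ,χ) ∈ ℝ², ψ(τ,χ) > 0 if and only if χ < inf α(τ), and ψ(τ,χ) < 0 if and only if χ > sup α(τ). -/

import Mathlib

/-! For fixed `τ`, `α τ` is the zero set of the continuous antitone map `χ ↦ ψ τ χ`, hence a
nonempty compact interval `[sInf (α τ), sSup (α τ)]`. An antitone function vanishing exactly
there is positive to its left and negative to its right. -/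

section ZeroSet

variable {α β : Type*} [LinearOrder α] [PartialOrder β] [Zero β] {f : α → β} {a x : α}

theorem Antitone.pos_iff_lt_of_isLeast_preimage_zero (hf : Antitone f)
    (ha : IsLeast (f ⁻¹' {0}) a) : 0 < f x ↔ x < a := by
  constructor
  · intro hpos
    by_contra! hax
    exact (hf hax).trans_eq ha.1 |>.not_gt hpos
  · intro hxa
    have hnonneg : 0 ≤ f x := ha.1.symm.trans_le (hf hxa.le)
    refine hnonneg.lt_of_ne fun hzero => ?_
    exact (ha.2 hzero.symm).not_gt hxa

theorem Antitone.neg_iff_lt_of_isGreatest_preimage_zero (hf : Antitone f)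
    (ha : IsGreatest (f ⁻¹' {0}) a) : f x < 0 ↔ a < x :=
  hf.dual.pos_iff_lt_of_isLeast_preimage_zero (β := βᵒᵈ) ha

end ZeroSet

theorem stmt_0_general (ψ : ℝ → ℝ → ℝ) (α : ℝ → Set ℝ) (M : ℝ)
    (hψcont : Continuous fun p : ℝ × ℝ => ψ p.1 p.2)
    (hψanti : ∀ τ : ℝ, Antitone fun χ => ψ τ χ)
    (hbdd : ∀ r s : ℝ, s ∈ α r → |s| ≤ M)
    (hdom : ∀ r : ℝ, (α r).Nonempty)
    (hcompat : ∀ τ χ : ℝ, ψ τ χ = 0 ↔ χ ∈ α τ) :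
    ∀ τ χ : ℝ, (0 < ψ τ χ ↔ χ < sInf (α τ)) ∧ (ψ τ χ < 0 ↔ sSup (α τ) < χ) := by
  intro τ χ
  have hzero : (fun x => ψ τ x) ⁻¹' {0} = α τ := Set.ext fun x => hcompat τ x
  have hclosed : IsClosed (α τ) :=
    hzero ▸ isClosed_singleton.preimage (hψcont.comp (Continuous.prodMk_right τ))
  have hbddBelow : BddBelow (α τ) := ⟨-M, fun s hs => neg_le_of_abs_le (hbdd τ s hs)⟩
  have hbddAbove : BddAbove (α τ) := ⟨M, fun s hs => le_of_abs_le (hbdd τ s hs)⟩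
  have hne := hdom τ
  rw [← hzero] at hclosed hbddBelow hbddAbove hne ⊢
  exact ⟨(hψanti τ).pos_iff_lt_of_isLeast_preimage_zero (hclosed.isLeast_csInf hne hbddBelow),
    (hψanti τ).neg_iff_lt_of_isGreatest_preimage_zero (hclosed.isGreatest_csSup hne hbddAbove)⟩

/-- sign of ψ versus the maximal monotone graph α. -/
theorem stmt_0 (ψ : ℝ → ℝ → ℝ) (α : ℝ → Set ℝ) (M : ℝ)
    (hψcont : Continuous fun p : ℝ × ℝ => ψ p.1 p.2)
    (hψmono : ∀ χ : ℝ, Monotone fun τ => ψ τ χ)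
    (hψanti : ∀ τ : ℝ, Antitone fun χ => ψ τ χ)
    (hmono : ∀ r₁ r₂ s₁ s₂ : ℝ, s₁ ∈ α r₁ → s₂ ∈ α r₂ → 0 ≤ (s₁ - s₂) * (r₁ - r₂))
    (hmax : ∀ ρ σ : ℝ, (∀ r s : ℝ, s ∈ α r → 0 ≤ (σ - s) * (ρ - r)) → σ ∈ α ρ)
    (hM : 0 < M) (hbdd : ∀ r s : ℝ, s ∈ α r → |s| ≤ M)
    (hdom : ∀ r : ℝ, (α r).Nonempty)
    (hcompat : ∀ τ χ : ℝ, ψ τ χ = 0 ↔ χ ∈ α τ) :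
    ∀ τ χ : ℝ, (0 < ψ τ χ ↔ χ < sInf (α τ)) ∧ (ψ τ χ < 0 ↔ sSup (α τ) < χ) :=
  stmt_0_general ψ α M hψcont hψanti hbdd hdom hcompat
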